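/- Let G be obtained from the disjoint union of graphs G₁ and G₂ by adding a single edge {v₁, v₂} with v₁ ∈ V(G₁), v₂ ∈ V(G₂). If for i = 1,2 both per(L_{G_i} ∘ L_{G_i}) ≤ per(L_{G_i})² and per(L_{G_i}(v_i) ∘ L_{G_i}(v_i)) ≤ per(L_{G_i}(v_i))² hold, then per(L_G ∘ L_G) ≤ per(L_G)². -/

import Mathlib

open Matrix

/-- The Laplacian matrix of a simple graph, with real entries. -/
noncomputable def lap {V : Type*} [Fintype V] [DecidableEq V] (G : SimpleGraph V) :
    Matrix V V ℝ :=
  letI := Classical.decRel G.Adj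
  G.lapMatrix ℝ

/-- The principal submatrix of `A` obtained by deleting row and column `v`. -/
def del {V : Type*} (A : Matrix V V ℝ) (v : V) :
    Matrix {x : V // x ≠ v} {x : V // x ≠ v} ℝ :=
  A.submatrix Subtype.val Subtype.val

/-- The graph obtained from the disjoint union of `G₁` and `G₂` by adding the
single edge `{v₁, v₂}`. -/
def edgeJoin {V₁ V₂ : Type*} (G₁ : SimpleGraph V₁) (G₂ : SimpleGraph V₂)
    (v₁ : V₁) (v₂ : V₂) : SimpleGraph (V₁ ⊕ V₂) where
  Adj x y :=
    match x, y with
    | Sum.inl a, Sum.inl b => G₁.Adj a b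
    | Sum.inl a, Sum.inr b => a = v₁ ∧ b = v₂
    | Sum.inr a, Sum.inl b => b = v₁ ∧ a = v₂
    | Sum.inr a, Sum.inr b => G₂.Adj a b
  symm := by
    constructor
    rintro (a | a) (b | b) h
    · exact G₁.adj_symm h
    · exact h
    · exact h
    · exact G₂.adj_symm h
  loopless := by
    constructor
    rintro (a | a) h
    · exact G₁.irrefl h
    · exact G₂.irrefl h


set_option linter.unusedSectionVars false
set_option maxHeartbeats 1000000

namespace CholletAux

open Matrix Equiv Finset

variable {V K : Type*} [Fintype V] [DecidableEq V] [Fintype K] [DecidableEq K]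

lemma prod_split (j : V) (f : V → ℝ) :
    ∏ i, f i = f j * ∏ i : {x : V // x ≠ j}, f i := by
  rw [Fintype.prod_eq_mul_prod_compl j f]
  congr 1
  exact Finset.prod_subtype ({j}ᶜ : Finset V) (by simp) f

/-- The permutation sending `j` to `v` built from an equiv of complements. -/
def phi (v j : V) (β : {i : V // i ≠ j} ≃ {i : V // i ≠ v}) : Equiv.Perm V where
  toFun i := if h : i = j then v else (β ⟨i, h⟩ : V)
  invFun w := if h : w = v then j else (β.symm ⟨w, h⟩ : V)
  left_inv i := by
    by_cases h : i = j
    · simp [h]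
    · have h2 : ((β ⟨i, h⟩ : {i : V // i ≠ v}) : V) ≠ v := (β ⟨i, h⟩).2
      simp only [dif_neg h, dif_neg h2]
      simp
  right_inv w := by
    by_cases h : w = v
    · simp [h]
    · simp only [dif_neg h]
      rw [dif_neg (β.symm ⟨w, h⟩).2]
      simp

@[simp] lemma phi_apply_self (v j : V) (β : {i : V // i ≠ j} ≃ {i : V // i ≠ v}) :
    phi v j β j = v := by simp [phi]

lemma phi_apply_ne (v j : V) (β : {i : V // i ≠ j} ≃ {i : V // i ≠ v})
    (i : {i : V // i ≠ j}) : phi v j β (i : V) = (β i : V) := by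
  simp only [phi, Equiv.coe_fn_mk, dif_neg i.2]

lemma phi_bijective (v : V) :
    Function.Bijective (fun p : (Σ j : V, ({i : V // i ≠ j} ≃ {i : V // i ≠ v})) =>
      phi v p.1 p.2) := by
  constructor
  · rintro ⟨j, β⟩ ⟨j', β'⟩ h
    replace h : phi v j β = phi v j' β' := h
    have hj : j = j' := by
      by_contra hne
      have h1 : phi v j β j = v := phi_apply_self v j β
      have h2 : phi v j' β' j = (β' ⟨j, hne⟩ : V) := phi_apply_ne v j' β' ⟨j, hne⟩
      rw [h] at h1
      exact (β' ⟨j, hne⟩).2 (h2 ▸ h1)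
    subst hj
    simp only [Sigma.mk.inj_iff, heq_eq_eq, true_and]
    ext i
    have h1 := phi_apply_ne v j β i
    have h2 := phi_apply_ne v j β' i
    rw [← h1, ← h2, h]
  · intro σ
    refine ⟨⟨σ.symm v, ?_⟩, ?_⟩
    · refine ⟨fun i => ⟨σ i, fun hv => i.2 ?_⟩, fun w => ⟨σ.symm w, fun hj => w.2 ?_⟩,
        fun i => by simp, fun w => by simp⟩
      · exact σ.injective (by simpa using hv)
      · have := congrArg σ hj
        simpa using this
    · ext i
      by_cases h : i = σ.symm v
      · subst h; simp [phi]
      · exact phi_apply_ne v (σ.symm v) _ ⟨i, h⟩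

lemma sum_perm_decompose (v : V) (f : Equiv.Perm V → ℝ) :
    ∑ σ : Equiv.Perm V, f σ =
      ∑ j : V, ∑ β : ({i : V // i ≠ j} ≃ {i : V // i ≠ v}), f (phi v j β) := by
  rw [← Fintype.sum_bijective _ (phi_bijective v) _ f (fun p => rfl)]
  rw [← Finset.univ_sigma_univ, Finset.sum_sigma]


section Permanent

variable {V K : Type*} [Fintype V] [DecidableEq V] [Fintype K] [DecidableEq K]

lemma permanent_nonneg {A : Matrix V V ℝ} (h : ∀ i j, 0 ≤ A i j) : 0 ≤ A.permanent :=
  Finset.sum_nonneg fun _ _ => Finset.prod_nonneg fun _ _ => h _ _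

lemma permanent_del (v : V) (A : Matrix V V ℝ) :
    (del A v).permanent = ∑ β : Equiv.Perm {i : V // i ≠ v}, ∏ i, A (β i) i := by
  simp [Matrix.permanent, del, Matrix.submatrix_apply]

lemma permanent_expand_along (v : V) (A : Matrix V V ℝ) :
    A.permanent = ∑ j : V, ∑ β : ({i : V // i ≠ j} ≃ {i : V // i ≠ v}),
      A v j * ∏ i : {i : V // i ≠ j}, A (β i) i := by
  unfold Matrix.permanent
  rw [sum_perm_decompose v]
  refine Finset.sum_congr rfl fun j _ => Finset.sum_congr rfl fun β _ => ?_
  rw [prod_split j (fun i => A (phi v j β i) i), phi_apply_self]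
  congr 1
  exact Finset.prod_congr rfl fun i _ => by rw [phi_apply_ne]

lemma permanent_add_single (A : Matrix V V ℝ) (v : V) (c : ℝ) :
    (A + Matrix.single v v c).permanent = A.permanent + c * (del A v).permanent := by
  rw [permanent_expand_along v (A + Matrix.single v v c), permanent_expand_along v A]
  have hrow : ∀ (j : V) (β : ({i : V // i ≠ j} ≃ {i : V // i ≠ v})) (i : {i : V // i ≠ j}),
      (A + Matrix.single v v c) (β i) i = A (β i) i := by
    intro j β i
    have h0 : ((β i : V) = v) = False := by simp [(β i).2]
    simp only [Matrix.add_apply, Matrix.single, Matrix.of_apply, add_eq_left,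
      ite_eq_right_iff, and_imp]
    exact fun h' _ => absurd h'.symm ((β i).2)
  have hsplit : ∀ (j : V) (β : ({i : V // i ≠ j} ≃ {i : V // i ≠ v})),
      (A + Matrix.single v v c) v j * ∏ i : {i : V // i ≠ j},
          (A + Matrix.single v v c) (β i) i
        = A v j * ∏ i : {i : V // i ≠ j}, A (β i) i
          + (if j = v then c else 0) * ∏ i : {i : V // i ≠ j}, A (β i) i := by
    intro j β
    rw [Finset.prod_congr rfl fun i _ => hrow j β i]
    have : (A + Matrix.single v v c) v j = A v j + (if j = v then c else 0) := by
      by_cases h : j = v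
      · subst h; simp [Matrix.single]
      · simp only [Matrix.add_apply, Matrix.single, Matrix.of_apply, if_neg h, add_zero,
          add_eq_left, ite_eq_right_iff, and_imp]
        exact fun _ h' => absurd h'.symm h
    rw [this, add_mul]
  simp_rw [hsplit]
  rw [Finset.sum_congr rfl fun j _ => Finset.sum_add_distrib, Finset.sum_add_distrib]
  congr 1
  rw [Finset.sum_eq_single v]
  · rw [permanent_del v A, Finset.mul_sum]
    exact Finset.sum_congr rfl fun β _ => by simp
  · intro j _ hj
    simp [hj]
  · simp

end Permanent

section Gram

variable {V W K : Type*} [Fintype V] [DecidableEq V] [Fintype W] [DecidableEq W]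
  [Fintype K] [DecidableEq K]

/-- The Gram matrix of a family of vectors. -/
def gram (y : W → K → ℝ) : Matrix W W ℝ := Matrix.of fun i j => ∑ k, y i k * y j k

lemma master {I : Type*} [Fintype I] [DecidableEq I] (y : W → K → ℝ) :
    ∑ g : I → K, (∑ β : I ≃ W, ∏ i, y (β i) (g i)) ^ 2
      = (Fintype.card (I ≃ W) : ℝ) * (gram y).permanent := by
  have step1 : ∀ g : I → K, (∑ β : I ≃ W, ∏ i, y (β i) (g i)) ^ 2
      = ∑ β : I ≃ W, ∑ γ : I ≃ W, ∏ i, (y (β i) (g i) * y (γ i) (g i)) := by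
    intro g
    rw [sq, Finset.sum_mul_sum]
    exact Finset.sum_congr rfl fun β _ => Finset.sum_congr rfl fun γ _ =>
      (Finset.prod_mul_distrib).symm
  simp_rw [step1]
  rw [Finset.sum_comm]
  have step2 : ∀ β : I ≃ W, ∑ g : I → K, ∑ γ : I ≃ W, ∏ i, (y (β i) (g i) * y (γ i) (g i))
      = ∑ γ : I ≃ W, ∏ i, (gram y) (β i) (γ i) := by
    intro β
    rw [Finset.sum_comm]
    refine Finset.sum_congr rfl fun γ _ => ?_
    refine Eq.symm ?_
    calc ∏ i, (gram y) (β i) (γ i) = ∏ i, ∑ k, y (β i) k * y (γ i) k := rfl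
      _ = ∑ g ∈ Fintype.piFinset (fun _ => Finset.univ), ∏ i, y (β i) (g i) * y (γ i) (g i) :=
          Finset.prod_univ_sum _ _
      _ = ∑ g : I → K, ∏ i, y (β i) (g i) * y (γ i) (g i) := by rw [Fintype.piFinset_univ]
  simp_rw [step2]
  have step3 : ∀ β γ : I ≃ W, ∏ i, (gram y) (β i) (γ i)
      = ∏ w, (gram y) ((γ.symm.trans β) w) w := by
    intro β γ
    rw [show (∏ w, (gram y) ((γ.symm.trans β) w) w)
          = ∏ w, (fun i => (gram y) (β i) (γ i)) (γ.symm w) from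
        Finset.prod_congr rfl (fun w _ => by simp),
      Equiv.prod_comp γ.symm (fun i => (gram y) (β i) (γ i))]
  rw [Finset.sum_comm]
  have step4 : ∀ γ : I ≃ W, ∑ β : I ≃ W, ∏ w, (gram y) ((γ.symm.trans β) w) w
      = (gram y).permanent := by
    intro γ
    unfold Matrix.permanent
    refine Fintype.sum_bijective (fun β : I ≃ W => γ.symm.trans β) ?_ _ _ (fun β => rfl)
    constructor
    · intro β β' h
      have := congrArg (fun ρ => γ.trans ρ) h
      simpa [Equiv.trans_assoc, ← Equiv.trans_assoc] using this
    · intro ρ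
      exact ⟨γ.trans ρ, by ext i; simp⟩
  calc ∑ γ : I ≃ W, ∑ β : I ≃ W, ∏ i, (gram y) (β i) (γ i)
      = ∑ γ : I ≃ W, ∑ β : I ≃ W, ∏ w, (gram y) ((γ.symm.trans β) w) w := by
        exact Finset.sum_congr rfl fun γ _ => Finset.sum_congr rfl fun β _ => step3 β γ
    _ = ∑ _γ : I ≃ W, (gram y).permanent := Finset.sum_congr rfl fun γ _ => step4 γ
    _ = (Fintype.card (I ≃ W) : ℝ) * (gram y).permanent := by
        rw [Finset.sum_const, Finset.card_univ, nsmul_eq_mul]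

lemma permanent_gram_nonneg (y : W → K → ℝ) : 0 ≤ (gram y).permanent := by
  have h := master (I := W) y
  have hpos : (0 : ℝ) < (Fintype.card (W ≃ W) : ℝ) := by
    exact_mod_cast Fintype.card_pos
  have hsum : 0 ≤ ∑ g : W → K, (∑ β : W ≃ W, ∏ i, y (β i) (g i)) ^ 2 :=
    Finset.sum_nonneg fun g _ => sq_nonneg _
  nlinarith [h, hpos, hsum]

end Gram

section GramMain

variable {V K : Type*} [Fintype V] [DecidableEq V] [Fintype K] [DecidableEq K]

/-- Split a function space at one coordinate. -/
def splitOne (j : V) : (V → K) ≃ K × ({i : V // i ≠ j} → K) where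
  toFun g := (g j, fun i => g i)
  invFun p := fun i => if h : i = j then p.1 else p.2 ⟨i, h⟩
  left_inv g := by
    funext i
    by_cases h : i = j <;> simp [h]
  right_inv p := by
    refine Prod.ext (by simp) ?_
    funext i
    simp [i.2]

/-- Split a function space at two coordinates. -/
def splitTwo (j j' : V) (hjj : j ≠ j') :
    (V → K) ≃ K × K × ({i : V // i ≠ j ∧ i ≠ j'} → K) where
  toFun g := (g j, g j', fun i => g i)
  invFun p := fun i =>
    if h1 : i = j then p.1 else if h2 : i = j' then p.2.1 else p.2.2 ⟨i, h1, h2⟩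
  left_inv g := by
    funext i
    by_cases h1 : i = j
    · simp [h1]
    · by_cases h2 : i = j' <;> simp [h1, h2, Ne.symm hjj]
  right_inv p := by
    refine Prod.ext (by simp) (Prod.ext ?_ ?_)
    · simp [Ne.symm hjj]
    · funext i
      simp [i.2.1, i.2.2]

lemma cross_nonneg (u : (V → K) → ℝ) (j j' : V) (hjj : j ≠ j')
    (hu : ∀ g b, u (Function.update g j' b) = u g) :
    0 ≤ ∑ g : V → K, u g * u (g ∘ (Equiv.swap j j' : Equiv.Perm V)) := by
  have e := splitTwo (K := K) j j' hjj
  rw [← Fintype.sum_equiv (splitTwo (K := K) j j' hjj).symm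
      (fun p => u ((splitTwo j j' hjj).symm p) *
        u (((splitTwo j j' hjj).symm p) ∘ (Equiv.swap j j' : Equiv.Perm V)))
      _ (fun p => rfl)]
  have hcomp : ∀ a b r, ((splitTwo (K := K) j j' hjj).symm (a, b, r)) ∘
      (Equiv.swap j j' : Equiv.Perm V) = (splitTwo j j' hjj).symm (b, a, r) := by
    intro a b r
    funext i
    by_cases h1 : i = j
    · subst h1
      simp [splitTwo, Equiv.swap_apply_left, hjj, Ne.symm hjj]
    · by_cases h2 : i = j'
      · subst h2
        simp [splitTwo, Equiv.swap_apply_right, hjj, Ne.symm hjj]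
      · simp [splitTwo, Equiv.swap_apply_of_ne_of_ne h1 h2, h1, h2]
  have hindep : ∀ a b b' r, u ((splitTwo (K := K) j j' hjj).symm (a, b, r))
      = u ((splitTwo j j' hjj).symm (a, b', r)) := by
    intro a b b' r
    have : (splitTwo (K := K) j j' hjj).symm (a, b, r)
        = Function.update ((splitTwo j j' hjj).symm (a, b', r)) j' b := by
      funext i
      by_cases h1 : i = j
      · subst h1; simp [splitTwo, Function.update, Ne.symm hjj, hjj]
      · by_cases h2 : i = j'
        · subst h2; simp [splitTwo, Function.update, h1]
        · simp [splitTwo, Function.update, h1, h2]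
    rw [this, hu]
  set U : K → ({i : V // i ≠ j ∧ i ≠ j'} → K) → ℝ :=
    fun a r => u ((splitTwo (K := K) j j' hjj).symm (a, a, r)) with hU
  have hval : ∀ a b r, u ((splitTwo (K := K) j j' hjj).symm (a, b, r)) = U a r := by
    intro a b r
    rw [hU]
    exact hindep a b a r
  calc (0:ℝ) ≤ ∑ r : {i : V // i ≠ j ∧ i ≠ j'} → K, (∑ a : K, U a r) ^ 2 :=
        Finset.sum_nonneg fun r _ => sq_nonneg _
    _ = ∑ r : {i : V // i ≠ j ∧ i ≠ j'} → K, ∑ a : K, ∑ b : K, U a r * U b r := by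
        refine Finset.sum_congr rfl fun r _ => ?_
        rw [sq, Finset.sum_mul_sum]
    _ = ∑ a : K, ∑ r : {i : V // i ≠ j ∧ i ≠ j'} → K, ∑ b : K, U a r * U b r :=
        Finset.sum_comm
    _ = ∑ a : K, ∑ b : K, ∑ r : {i : V // i ≠ j ∧ i ≠ j'} → K, U a r * U b r :=
        Finset.sum_congr rfl fun a _ => Finset.sum_comm
    _ = ∑ p : K × K × ({i : V // i ≠ j ∧ i ≠ j'} → K), U p.1 p.2.2 * U p.2.1 p.2.2 := by
        rw [Fintype.sum_prod_type]
        refine Finset.sum_congr rfl fun a _ => ?_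
        rw [Fintype.sum_prod_type]
    _ = ∑ p : K × K × ({i : V // i ≠ j ∧ i ≠ j'} → K),
          u ((splitTwo j j' hjj).symm p) *
            u (((splitTwo j j' hjj).symm p) ∘ (Equiv.swap j j' : Equiv.Perm V)) := by
        refine Finset.sum_congr rfl fun p _ => ?_
        obtain ⟨a, b, r⟩ := p
        rw [hcomp a b r, hval a b r, hval b a r]

end GramMain

section GramIneq

variable {V K : Type*} [Fintype V] [DecidableEq V] [Fintype K] [DecidableEq K]

/-- Partial permanental sum. -/
def Gf (x : V → K → ℝ) (v j : V) (g : V → K) : ℝ :=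
  ∑ β : ({i : V // i ≠ j} ≃ {i : V // i ≠ v}), ∏ i : {i : V // i ≠ j}, x (β i) (g i)

lemma F_decomp (x : V → K → ℝ) (v : V) (g : V → K) :
    (∑ β : V ≃ V, ∏ i, x (β i) (g i)) = ∑ j : V, x v (g j) * Gf x v j g := by
  rw [show (∑ β : V ≃ V, ∏ i, x (β i) (g i))
      = ∑ σ : Equiv.Perm V, ∏ i, x (σ i) (g i) from rfl,
    sum_perm_decompose v (fun σ => ∏ i, x (σ i) (g i))]
  refine Finset.sum_congr rfl fun j _ => ?_
  rw [Gf, Finset.mul_sum]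
  refine Finset.sum_congr rfl fun β _ => ?_
  rw [prod_split j (fun i => x (phi v j β i) (g i)), phi_apply_self]
  congr 1
  exact Finset.prod_congr rfl fun i _ => by rw [phi_apply_ne]

lemma Gf_update (x : V → K → ℝ) (v j : V) (g : V → K) (b : K) :
    Gf x v j (Function.update g j b) = Gf x v j g := by
  unfold Gf
  refine Finset.sum_congr rfl fun β _ => Finset.prod_congr rfl fun i _ => ?_
  rw [Function.update_of_ne i.2]

/-- The complement-subtype equivalence induced by a swap. -/
def sHat (j j' : V) : {i : V // i ≠ j} ≃ {i : V // i ≠ j'} :=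
  (Equiv.swap j j').subtypeEquiv (fun a => by
    constructor
    · intro ha hsw
      exact ha ((Equiv.swap j j').injective (hsw.trans (Equiv.swap_apply_left j j').symm))
    · intro h ha
      apply h
      rw [ha]
      exact Equiv.swap_apply_left j j')

lemma sHat_coe (j j' : V) (i : {i : V // i ≠ j}) :
    ((sHat j j' i : {i : V // i ≠ j'}) : V) = Equiv.swap j j' (i : V) := rfl

lemma Gf_swap (x : V → K → ℝ) (v j j' : V) (g : V → K) :
    Gf x v j' (g ∘ (Equiv.swap j j' : Equiv.Perm V)) = Gf x v j g := by
  unfold Gf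
  refine Fintype.sum_equiv
    (Equiv.equivCongr (sHat j j').symm (Equiv.refl ({i : V // i ≠ v}))) _ _ fun β => ?_
  have happ : ∀ i' : {i : V // i ≠ j},
      ((((sHat j j').symm.equivCongr (Equiv.refl {i : V // i ≠ v})) β) i')
        = β (sHat j j' i') := fun i' => by
    simp [Equiv.equivCongr]
  calc ∏ i : {i : V // i ≠ j'}, x (β i) ((g ∘ (Equiv.swap j j' : Equiv.Perm V)) (i : V))
      = ∏ i' : {i : V // i ≠ j}, x (β (sHat j j' i')) (g (i' : V)) := by
        rw [← Equiv.prod_comp (sHat j j')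
          (fun i : {i : V // i ≠ j'} => x (β i) ((g ∘ (Equiv.swap j j' : Equiv.Perm V)) (i : V)))]
        exact Finset.prod_congr rfl fun i' _ => by
          simp only [Function.comp_apply, sHat_coe, Equiv.swap_apply_self]
    _ = _ := Finset.prod_congr rfl fun i' _ => by rw [happ i']

lemma splitOne_symm_self (j : V) (a : K) (h : {i : V // i ≠ j} → K) :
    (splitOne j).symm (a, h) j = a := by simp [splitOne]

lemma splitOne_symm_ne (j : V) (a : K) (h : {i : V // i ≠ j} → K) (i : {i : V // i ≠ j}) :
    (splitOne j).symm (a, h) (i : V) = h i := by simp [splitOne, i.2]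

lemma gram_del (x : V → K → ℝ) (v : V) :
    del (gram x) v = gram (fun w : {i : V // i ≠ v} => x (w : V)) := rfl

lemma diag_term (x : V → K → ℝ) (v j : V) :
    (∑ g : V → K, (x v (g j) * Gf x v j g) * (x v (g j) * Gf x v j g))
      = (gram x) v v * ((Fintype.card ({i : V // i ≠ j} ≃ {i : V // i ≠ v}) : ℝ)
          * (del (gram x) v).permanent) := by
  rw [← Equiv.sum_comp ((splitOne (K := K) j).symm)
    (fun g => (x v (g j) * Gf x v j g) * (x v (g j) * Gf x v j g))]
  have hG : ∀ (a : K) (h : {i : V // i ≠ j} → K),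
      Gf x v j ((splitOne j).symm (a, h))
        = ∑ β : ({i : V // i ≠ j} ≃ {i : V // i ≠ v}), ∏ i, x (β i) (h i) := by
    intro a h
    exact Finset.sum_congr rfl fun β _ => Finset.prod_congr rfl fun i _ => by
      rw [splitOne_symm_ne]
  calc ∑ p : K × ({i : V // i ≠ j} → K),
        (x v ((splitOne j).symm p j) * Gf x v j ((splitOne j).symm p)) *
          (x v ((splitOne j).symm p j) * Gf x v j ((splitOne j).symm p))
      = ∑ a : K, ∑ h : {i : V // i ≠ j} → K,
          (x v a * x v a) *
            ((∑ β : ({i : V // i ≠ j} ≃ {i : V // i ≠ v}), ∏ i, x (β i) (h i)) *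
             (∑ β : ({i : V // i ≠ j} ≃ {i : V // i ≠ v}), ∏ i, x (β i) (h i))) := by
        rw [Fintype.sum_prod_type]
        exact Finset.sum_congr rfl fun a _ => Finset.sum_congr rfl fun h _ => by
          rw [splitOne_symm_self, hG a h]; ring
    _ = (∑ a : K, x v a * x v a) *
          (∑ h : {i : V // i ≠ j} → K,
            (∑ β : ({i : V // i ≠ j} ≃ {i : V // i ≠ v}), ∏ i, x (β i) (h i)) ^ 2) := by
        rw [Finset.sum_mul_sum]
        exact Finset.sum_congr rfl fun a _ => Finset.sum_congr rfl fun h _ => by rw [sq]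
    _ = (gram x) v v * ((Fintype.card ({i : V // i ≠ j} ≃ {i : V // i ≠ v}) : ℝ)
          * (del (gram x) v).permanent) := by
        rw [master (fun w : {i : V // i ≠ v} => x (w : V)), gram_del]
        rfl

lemma card_sum_eq (v : V) :
    ∑ j : V, (Fintype.card ({i : V // i ≠ j} ≃ {i : V // i ≠ v}) : ℝ)
      = (Fintype.card (Equiv.Perm V) : ℝ) := by
  rw [← Nat.cast_sum]
  norm_cast
  rw [← Fintype.card_sigma]
  exact Fintype.card_of_bijective (phi_bijective v)

lemma gram_ineq (x : V → K → ℝ) (v : V) :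
    gram x v v * (del (gram x) v).permanent ≤ (gram x).permanent := by
  set S : V → V → ℝ := fun j j' => ∑ g : V → K,
    (x v (g j) * Gf x v j g) * (x v (g j') * Gf x v j' g) with hS
  have key : (Fintype.card (V ≃ V) : ℝ) * (gram x).permanent = ∑ j : V, ∑ j' : V, S j j' := by
    rw [← master (I := V) x]
    calc ∑ g : V → K, (∑ β : V ≃ V, ∏ i, x (β i) (g i)) ^ 2
        = ∑ g : V → K, ∑ j : V, ∑ j' : V,
            (x v (g j) * Gf x v j g) * (x v (g j') * Gf x v j' g) := by
          refine Finset.sum_congr rfl fun g _ => ?_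
          rw [F_decomp x v g, sq, Finset.sum_mul_sum]
      _ = ∑ j : V, ∑ j' : V, S j j' := by
          rw [Finset.sum_comm]
          exact Finset.sum_congr rfl fun j _ => Finset.sum_comm
  have hdiag : ∑ j : V, S j j
      = (gram x) v v * (del (gram x) v).permanent * (Fintype.card (Equiv.Perm V) : ℝ) := by
    calc ∑ j : V, S j j
        = ∑ j : V, (gram x) v v * ((Fintype.card ({i : V // i ≠ j} ≃ {i : V // i ≠ v}) : ℝ)
            * (del (gram x) v).permanent) :=
          Finset.sum_congr rfl fun j _ => diag_term x v j
      _ = (gram x) v v * (del (gram x) v).permanent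
            * ∑ j : V, (Fintype.card ({i : V // i ≠ j} ≃ {i : V // i ≠ v}) : ℝ) := by
          rw [Finset.mul_sum]
          exact Finset.sum_congr rfl fun j _ => by ring
      _ = _ := by rw [card_sum_eq v]
  have hoff : ∀ j j' : V, j ≠ j' → 0 ≤ S j j' := by
    intro j j' hjj
    have hcn := cross_nonneg (fun g => x v (g j) * Gf x v j' g) j j' hjj
      (fun g b => by
        show x v (Function.update g j' b j) * Gf x v j' (Function.update g j' b)
            = x v (g j) * Gf x v j' g
        rw [Function.update_of_ne hjj, Gf_update])
    refine le_trans hcn (le_of_eq (Finset.sum_congr rfl fun g _ => ?_))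
    show (x v (g j) * Gf x v j' g) *
        (x v ((g ∘ (Equiv.swap j j' : Equiv.Perm V)) j)
          * Gf x v j' (g ∘ (Equiv.swap j j' : Equiv.Perm V))) = _
    rw [show (g ∘ (Equiv.swap j j' : Equiv.Perm V)) j = g j' by
        simp only [Function.comp_apply, Equiv.swap_apply_left],
      Gf_swap x v j j' g]
    ring
  have hsplit : ∀ j : V, ∑ j' : V, S j j' = S j j + ∑ j' ∈ ({j}ᶜ : Finset V), S j j' :=
    fun j => Fintype.sum_eq_add_sum_compl j _
  have hpos : 0 ≤ ∑ j : V, ∑ j' ∈ ({j}ᶜ : Finset V), S j j' :=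
    Finset.sum_nonneg fun j _ => Finset.sum_nonneg fun j' hj' =>
      hoff j j' (by simpa [eq_comm] using Finset.mem_compl.mp hj')
  have hcard : (0:ℝ) < (Fintype.card (Equiv.Perm V) : ℝ) := by exact_mod_cast Fintype.card_pos
  have hkey2 : (Fintype.card (Equiv.Perm V) : ℝ) * (gram x).permanent
      ≥ (gram x) v v * (del (gram x) v).permanent * (Fintype.card (Equiv.Perm V) : ℝ) := by
    have : (Fintype.card (V ≃ V) : ℝ) = (Fintype.card (Equiv.Perm V) : ℝ) := rfl
    rw [← this, key]
    calc ∑ j : V, ∑ j' : V, S j j'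
        = ∑ j : V, (S j j + ∑ j' ∈ ({j}ᶜ : Finset V), S j j') :=
          Finset.sum_congr rfl fun j _ => hsplit j
      _ = (∑ j : V, S j j) + ∑ j : V, ∑ j' ∈ ({j}ᶜ : Finset V), S j j' :=
          Finset.sum_add_distrib
      _ ≥ (gram x) v v * (del (gram x) v).permanent * (Fintype.card (Equiv.Perm V) : ℝ) := by
          rw [hdiag]; linarith
  nlinarith [hkey2, hcard]

end GramIneq

section PSD

variable {V : Type*} [Fintype V] [DecidableEq V]

open scoped MatrixOrder in
lemma posSemidef_exists_gram {A : Matrix V V ℝ} (hA : A.PosSemidef) :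
    ∃ x : V → V → ℝ, A = gram x := by
  refine ⟨fun i k => CFC.sqrt A k i, ?_⟩
  have h1 : CFC.sqrt A * CFC.sqrt A = A := CFC.sqrt_mul_sqrt_self A hA.nonneg
  ext i j
  have h2 := congrFun (congrFun h1 i) j
  rw [← h2, Matrix.mul_apply]
  show _ = ∑ k, CFC.sqrt A k i * CFC.sqrt A k j
  refine Finset.sum_congr rfl fun k _ => ?_
  have hsym : CFC.sqrt A i k = CFC.sqrt A k i := by
    have h2 := (CFC.sqrt_nonneg A).posSemidef.1.apply i k
    simpa using h2.symm
  rw [hsym]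

lemma psd_permanent_nonneg {A : Matrix V V ℝ} (hA : A.PosSemidef) : 0 ≤ A.permanent := by
  obtain ⟨x, rfl⟩ := posSemidef_exists_gram hA
  exact permanent_gram_nonneg x

lemma psd_permanent_del_le {A : Matrix V V ℝ} (hA : A.PosSemidef) (v : V) :
    A v v * (del A v).permanent ≤ A.permanent := by
  obtain ⟨x, rfl⟩ := posSemidef_exists_gram hA
  exact gram_ineq x v

lemma psd_del {A : Matrix V V ℝ} (hA : A.PosSemidef) (v : V) : (del A v).PosSemidef :=
  hA.submatrix Subtype.val

lemma psd_diag_nonneg {A : Matrix V V ℝ} (hA : A.PosSemidef) (v : V) : 0 ≤ A v v := by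
  exact hA.diag_nonneg

lemma psd_stdBasis (v : V) {c : ℝ} (hc : 0 ≤ c) :
    (Matrix.single v v c).PosSemidef := by
  have h : Matrix.single v v c = Matrix.diagonal (Pi.single v c) := by
    ext i j
    by_cases h1 : i = v <;> by_cases h2 : j = v <;>
      simp only [Matrix.single, Matrix.of_apply, Matrix.diagonal_apply,
        Pi.single_apply, h1, h2] <;>
      simp <;> intros <;> simp_all
  rw [h]
  refine Matrix.posSemidef_diagonal_iff.mpr fun i => ?_
  by_cases h1 : i = v <;> simp [Pi.single_apply, h1, hc]

lemma lap_posSemidef {W : Type*} [Fintype W] [DecidableEq W] (G : SimpleGraph W) :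
    (lap G).PosSemidef := by
  letI := Classical.decRel G.Adj
  exact SimpleGraph.posSemidef_lapMatrix ℝ G

end PSD

section Block

open Sum

variable {V₁ V₂ : Type*} [Fintype V₁] [DecidableEq V₁] [Fintype V₂] [DecidableEq V₂]

/-- The "cross" permutation used in the single-edge block expansion. -/
def swapPerm (v₁ : V₁) (v₂ : V₂) (τ₁ : Equiv.Perm {a : V₁ // a ≠ v₁})
    (τ₂ : Equiv.Perm {b : V₂ // b ≠ v₂}) : Equiv.Perm (V₁ ⊕ V₂) :=
  (Equiv.sumCongr (Equiv.Perm.ofSubtype τ₁) (Equiv.Perm.ofSubtype τ₂)).trans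
    (Equiv.swap (inl v₁) (inr v₂))

lemma swapPerm_inl_v (v₁ : V₁) (v₂ : V₂) (τ₁ : Equiv.Perm {a : V₁ // a ≠ v₁})
    (τ₂ : Equiv.Perm {b : V₂ // b ≠ v₂}) : swapPerm v₁ v₂ τ₁ τ₂ (inl v₁) = inr v₂ := by
  have h1 : Equiv.Perm.ofSubtype τ₁ v₁ = v₁ :=
    Equiv.Perm.ofSubtype_apply_of_not_mem τ₁ (by simp)
  simp [swapPerm, h1]

lemma swapPerm_inr_v (v₁ : V₁) (v₂ : V₂) (τ₁ : Equiv.Perm {a : V₁ // a ≠ v₁})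
    (τ₂ : Equiv.Perm {b : V₂ // b ≠ v₂}) : swapPerm v₁ v₂ τ₁ τ₂ (inr v₂) = inl v₁ := by
  have h1 : Equiv.Perm.ofSubtype τ₂ v₂ = v₂ :=
    Equiv.Perm.ofSubtype_apply_of_not_mem τ₂ (by simp)
  simp [swapPerm, h1]

lemma swapPerm_inl (v₁ : V₁) (v₂ : V₂) (τ₁ : Equiv.Perm {a : V₁ // a ≠ v₁})
    (τ₂ : Equiv.Perm {b : V₂ // b ≠ v₂}) (a : {a : V₁ // a ≠ v₁}) :
    swapPerm v₁ v₂ τ₁ τ₂ (inl (a : V₁)) = inl ((τ₁ a : {a : V₁ // a ≠ v₁}) : V₁) := by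
  have h1 : Equiv.Perm.ofSubtype τ₁ (a : V₁) = ((τ₁ a : {a : V₁ // a ≠ v₁}) : V₁) := by
    rw [Equiv.Perm.ofSubtype_apply_of_mem τ₁ a.2]
  simp only [swapPerm, Equiv.trans_apply, Equiv.sumCongr_apply, Sum.map_inl, h1]
  exact Equiv.swap_apply_of_ne_of_ne (by simp [(τ₁ a).2]) (by simp)

lemma swapPerm_inr (v₁ : V₁) (v₂ : V₂) (τ₁ : Equiv.Perm {a : V₁ // a ≠ v₁})
    (τ₂ : Equiv.Perm {b : V₂ // b ≠ v₂}) (b : {b : V₂ // b ≠ v₂}) :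
    swapPerm v₁ v₂ τ₁ τ₂ (inr (b : V₂)) = inr ((τ₂ b : {b : V₂ // b ≠ v₂}) : V₂) := by
  have h1 : Equiv.Perm.ofSubtype τ₂ (b : V₂) = ((τ₂ b : {b : V₂ // b ≠ v₂}) : V₂) := by
    rw [Equiv.Perm.ofSubtype_apply_of_mem τ₂ b.2]
  simp only [swapPerm, Equiv.trans_apply, Equiv.sumCongr_apply, Sum.map_inr, h1]
  exact Equiv.swap_apply_of_ne_of_ne (by simp) (by simp [(τ₂ b).2])

lemma permanent_block (A : Matrix (V₁ ⊕ V₂) (V₁ ⊕ V₂) ℝ) (v₁ : V₁) (v₂ : V₂)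
    (h12 : ∀ a b, ¬(a = v₁ ∧ b = v₂) → A (inl a) (inr b) = 0)
    (h21 : ∀ a b, ¬(a = v₁ ∧ b = v₂) → A (inr b) (inl a) = 0) :
    A.permanent = (A.submatrix inl inl).permanent * (A.submatrix inr inr).permanent
      + (A (inl v₁) (inr v₂)) * (A (inr v₂) (inl v₁))
        * ((del (A.submatrix inl inl) v₁).permanent
            * (del (A.submatrix inr inr) v₂).permanent) := by
  classical
  set f : Equiv.Perm (V₁ ⊕ V₂) → ℝ := fun σ => ∏ i, A (σ i) i with hf
  set Sb : Finset (Equiv.Perm (V₁ ⊕ V₂)) :=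
    Finset.univ.image (fun p : Equiv.Perm V₁ × Equiv.Perm V₂ => Equiv.sumCongr p.1 p.2) with hSb
  set Ss : Finset (Equiv.Perm (V₁ ⊕ V₂)) :=
    Finset.univ.image (fun p : Equiv.Perm {a : V₁ // a ≠ v₁} × Equiv.Perm {b : V₂ // b ≠ v₂} =>
      swapPerm v₁ v₂ p.1 p.2) with hSs
  have hvanish : ∀ σ : Equiv.Perm (V₁ ⊕ V₂), σ ∉ Sb ∪ Ss → f σ = 0 := by
    intro σ hσ
    by_contra hfσ
    have hent : ∀ i, A (σ i) i ≠ 0 := by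
      intro i hi
      exact hfσ (Finset.prod_eq_zero (Finset.mem_univ i) hi)
    -- cross entries are constrained
    have hl : ∀ a : V₁, ∀ b : V₂, σ (inl a) = inr b → a = v₁ ∧ b = v₂ := by
      intro a b hab
      by_contra hcon
      exact hent (inl a) (by rw [hab]; exact h21 a b hcon)
    have hr : ∀ b : V₂, ∀ a : V₁, σ (inr b) = inl a → a = v₁ ∧ b = v₂ := by
      intro b a hab
      by_contra hcon
      exact hent (inr b) (by rw [hab]; exact h12 a b hcon)
    rcases hv : σ (inl v₁) with c₀ | b₀
    · -- block case
      have halll : ∀ a : V₁, ∃ c : V₁, σ (inl a) = inl c := by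
        intro a
        rcases ha : σ (inl a) with c | b
        · exact ⟨c, rfl⟩
        · obtain ⟨ha1, _⟩ := hl a b ha
          subst ha1
          rw [hv] at ha
          cases ha
      set g₁ : V₁ → V₁ := fun a => (halll a).choose with hg₁
      have hg₁spec : ∀ a, σ (inl a) = inl (g₁ a) := fun a => (halll a).choose_spec
      have hg₁inj : Function.Injective g₁ := by
        intro a a' h
        have := hg₁spec a ▸ hg₁spec a' ▸ congrArg (inl (β := V₂)) h
        exact inl_injective (σ.injective ((hg₁spec a).trans (h ▸ (hg₁spec a').symm)))
      have hg₁surj : Function.Surjective g₁ := Finite.surjective_of_injective hg₁inj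
      have hallr : ∀ b : V₂, ∃ d : V₂, σ (inr b) = inr d := by
        intro b
        rcases hb : σ (inr b) with a | d
        · obtain ⟨c, hc⟩ := hg₁surj a
          have := σ.injective (hb.trans (hc ▸ (hg₁spec c).symm))
          cases this
        · exact ⟨d, rfl⟩
      set g₂ : V₂ → V₂ := fun b => (hallr b).choose with hg₂
      have hg₂spec : ∀ b, σ (inr b) = inr (g₂ b) := fun b => (hallr b).choose_spec
      have hg₂inj : Function.Injective g₂ := by
        intro b b' h
        exact inr_injective (σ.injective ((hg₂spec b).trans (h ▸ (hg₂spec b').symm)))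
      apply hσ
      refine Finset.mem_union_left _ ?_
      rw [hSb]
      refine Finset.mem_image.mpr ⟨(Equiv.ofBijective g₁ (Finite.injective_iff_bijective.mp hg₁inj),
        Equiv.ofBijective g₂ (Finite.injective_iff_bijective.mp hg₂inj)), Finset.mem_univ _, ?_⟩
      ext i
      rcases i with a | b
      · simp [hg₁spec a, Equiv.ofBijective]
      · simp [hg₂spec b, Equiv.ofBijective]
    · -- swap case
      have hb₀ : b₀ = v₂ := (hl v₁ b₀ hv).2
      rw [hb₀] at hv
      clear hb₀
      have hrv : σ (inr v₂) = inl v₁ := by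
        by_contra hcon
        have hallr : ∀ b : V₂, ∃ d : V₂, σ (inr b) = inr d := by
          intro b
          rcases hb : σ (inr b) with a | d
          · obtain ⟨ha1, hb1⟩ := hr b a hb
            subst ha1; subst hb1
            exact absurd hb hcon
          · exact ⟨d, rfl⟩
        set g₂ : V₂ → V₂ := fun b => (hallr b).choose with hg₂
        have hg₂spec : ∀ b, σ (inr b) = inr (g₂ b) := fun b => (hallr b).choose_spec
        have hg₂inj : Function.Injective g₂ := fun b b' h =>
          inr_injective (σ.injective ((hg₂spec b).trans (h ▸ (hg₂spec b').symm)))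
        obtain ⟨b, hb⟩ := Finite.surjective_of_injective hg₂inj v₂
        have : σ (inr b) = σ (inl v₁) := by rw [hg₂spec b, hb, hv]
        cases σ.injective this
      have halll : ∀ a : {a : V₁ // a ≠ v₁}, ∃ c : {c : V₁ // c ≠ v₁},
          σ (inl (a : V₁)) = inl (c : V₁) := by
        rintro ⟨a, ha⟩
        rcases hab : σ (inl a) with c | b
        · refine ⟨⟨c, ?_⟩, rfl⟩
          intro hc
          subst hc
          have := σ.injective (hab.trans hrv.symm)
          cases this
        · exact absurd (hl a b hab).1 ha
      have hallr : ∀ b : {b : V₂ // b ≠ v₂}, ∃ d : {d : V₂ // d ≠ v₂},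
          σ (inr (b : V₂)) = inr (d : V₂) := by
        rintro ⟨b, hb⟩
        rcases hab : σ (inr b) with a | d
        · exact absurd (hr b a hab).2 hb
        · refine ⟨⟨d, ?_⟩, rfl⟩
          intro hd
          subst hd
          have := σ.injective (hab.trans hv.symm)
          cases this
      set t₁ : {a : V₁ // a ≠ v₁} → {a : V₁ // a ≠ v₁} := fun a => (halll a).choose with ht₁
      have ht₁spec : ∀ a : {a : V₁ // a ≠ v₁},
          σ (inl (a : V₁)) = inl ((t₁ a : {a : V₁ // a ≠ v₁}) : V₁) :=
        fun a => (halll a).choose_spec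
      have ht₁inj : Function.Injective t₁ := by
        intro a a' h
        have := σ.injective ((ht₁spec a).trans ((h ▸ (ht₁spec a')).symm))
        exact Subtype.ext (inl_injective this)
      set t₂ : {b : V₂ // b ≠ v₂} → {b : V₂ // b ≠ v₂} := fun b => (hallr b).choose with ht₂
      have ht₂spec : ∀ b : {b : V₂ // b ≠ v₂},
          σ (inr (b : V₂)) = inr ((t₂ b : {b : V₂ // b ≠ v₂}) : V₂) :=
        fun b => (hallr b).choose_spec
      have ht₂inj : Function.Injective t₂ := by
        intro b b' h
        have := σ.injective ((ht₂spec b).trans ((h ▸ (ht₂spec b')).symm))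
        exact Subtype.ext (inr_injective this)
      apply hσ
      refine Finset.mem_union_right _ ?_
      rw [hSs]
      refine Finset.mem_image.mpr
        ⟨(Equiv.ofBijective t₁ (Finite.injective_iff_bijective.mp ht₁inj),
          Equiv.ofBijective t₂ (Finite.injective_iff_bijective.mp ht₂inj)),
          Finset.mem_univ _, ?_⟩
      ext i
      rcases i with a | b
      · by_cases ha : a = v₁
        · subst ha
          rw [swapPerm_inl_v, ← hv]
        · rw [show (inl a : V₁ ⊕ V₂) = inl ((⟨a, ha⟩ : {a : V₁ // a ≠ v₁}) : V₁) from rfl,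
            swapPerm_inl v₁ v₂ _ _ ⟨a, ha⟩]
          exact (ht₁spec ⟨a, ha⟩).symm
      · by_cases hb : b = v₂
        · subst hb
          rw [swapPerm_inr_v, ← hrv]
        · rw [show (inr b : V₁ ⊕ V₂) = inr ((⟨b, hb⟩ : {b : V₂ // b ≠ v₂}) : V₂) from rfl,
            swapPerm_inr v₁ v₂ _ _ ⟨b, hb⟩]
          exact (ht₂spec ⟨b, hb⟩).symm
  have hdisj : Disjoint Sb Ss := by
    rw [Finset.disjoint_left]
    intro σ hb hs
    rw [hSb] at hb
    rw [hSs] at hs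
    obtain ⟨p, _, hp⟩ := Finset.mem_image.mp hb
    obtain ⟨q, _, hq⟩ := Finset.mem_image.mp hs
    have h1 : σ (inl v₁) = inl (p.1 v₁) := by rw [← hp]; rfl
    have h2 : σ (inl v₁) = inr v₂ := by rw [← hq]; exact swapPerm_inl_v v₁ v₂ q.1 q.2
    rw [h1] at h2
    cases h2
  have hinjb : ∀ p ∈ (Finset.univ : Finset (Equiv.Perm V₁ × Equiv.Perm V₂)), ∀ q ∈ Finset.univ,
      Equiv.sumCongr p.1 p.2 = Equiv.sumCongr q.1 q.2 → p = q := by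
    intro p _ q _ h
    have h1 : p.1 = q.1 := by
      ext a
      have h' := congrArg (fun σ : Equiv.Perm (V₁ ⊕ V₂) => σ (inl a)) h
      simp only [Equiv.sumCongr_apply, Sum.map_inl] at h'
      exact inl_injective (α := V₁) (β := V₂) h'
    have h2 : p.2 = q.2 := by
      ext b
      have h' := congrArg (fun σ : Equiv.Perm (V₁ ⊕ V₂) => σ (inr b)) h
      simp only [Equiv.sumCongr_apply, Sum.map_inr] at h'
      exact inr_injective (α := V₁) (β := V₂) h'
    exact Prod.ext h1 h2
  have hinjs : ∀ p ∈ (Finset.univ : Finset (Equiv.Perm {a : V₁ // a ≠ v₁} ×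
        Equiv.Perm {b : V₂ // b ≠ v₂})), ∀ q ∈ Finset.univ,
      swapPerm v₁ v₂ p.1 p.2 = swapPerm v₁ v₂ q.1 q.2 → p = q := by
    intro p _ q _ h
    have h1 : p.1 = q.1 := by
      ext a
      have hpa := swapPerm_inl v₁ v₂ p.1 p.2 a
      have hqa := swapPerm_inl v₁ v₂ q.1 q.2 a
      rw [h] at hpa
      exact inl_injective (hpa.symm.trans hqa)
    have h2 : p.2 = q.2 := by
      ext b
      have hpb := swapPerm_inr v₁ v₂ p.1 p.2 b
      have hqb := swapPerm_inr v₁ v₂ q.1 q.2 b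
      rw [h] at hpb
      exact inr_injective (hpb.symm.trans hqb)
    exact Prod.ext h1 h2
  have hb_eq : ∑ σ ∈ Sb, f σ
      = (A.submatrix inl inl).permanent * (A.submatrix inr inr).permanent := by
    rw [hSb, Finset.sum_image hinjb]
    calc ∑ p : Equiv.Perm V₁ × Equiv.Perm V₂, f (Equiv.sumCongr p.1 p.2)
        = ∑ p : Equiv.Perm V₁ × Equiv.Perm V₂,
            (∏ a : V₁, A (inl (p.1 a)) (inl a)) * (∏ b : V₂, A (inr (p.2 b)) (inr b)) := by
          refine Finset.sum_congr rfl fun p _ => ?_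
          rw [hf]
          exact Fintype.prod_sum_type _
      _ = (∑ σ₁ : Equiv.Perm V₁, ∏ a : V₁, A (inl (σ₁ a)) (inl a)) *
            (∑ σ₂ : Equiv.Perm V₂, ∏ b : V₂, A (inr (σ₂ b)) (inr b)) := by
          rw [Finset.sum_mul_sum]
          rw [Fintype.sum_prod_type]
      _ = _ := rfl
  have hs_eq : ∑ σ ∈ Ss, f σ
      = (A (inl v₁) (inr v₂)) * (A (inr v₂) (inl v₁))
        * ((del (A.submatrix inl inl) v₁).permanent
            * (del (A.submatrix inr inr) v₂).permanent) := by
    rw [hSs, Finset.sum_image hinjs]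
    calc ∑ p : Equiv.Perm {a : V₁ // a ≠ v₁} × Equiv.Perm {b : V₂ // b ≠ v₂},
          f (swapPerm v₁ v₂ p.1 p.2)
        = ∑ p : Equiv.Perm {a : V₁ // a ≠ v₁} × Equiv.Perm {b : V₂ // b ≠ v₂},
            (A (inr v₂) (inl v₁) * ∏ a : {a : V₁ // a ≠ v₁}, A (inl ((p.1 a : _) : V₁)) (inl a)) *
            (A (inl v₁) (inr v₂) * ∏ b : {b : V₂ // b ≠ v₂}, A (inr ((p.2 b : _) : V₂)) (inr b)) := by
          refine Finset.sum_congr rfl fun p _ => ?_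
          rw [hf]
          show (∏ i, A ((swapPerm v₁ v₂ p.1 p.2) i) i) = _
          rw [show (∏ i, A ((swapPerm v₁ v₂ p.1 p.2) i) i)
              = (∏ a : V₁, A ((swapPerm v₁ v₂ p.1 p.2) (inl a)) (inl a))
                * (∏ b : V₂, A ((swapPerm v₁ v₂ p.1 p.2) (inr b)) (inr b)) from
            Fintype.prod_sum_type _]
          congr 1
          · rw [prod_split v₁ (fun a => A ((swapPerm v₁ v₂ p.1 p.2) (inl a)) (inl a)),
              swapPerm_inl_v]
            congr 1
            exact Finset.prod_congr rfl fun a _ => by rw [swapPerm_inl v₁ v₂ p.1 p.2 a]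
          · rw [prod_split v₂ (fun b => A ((swapPerm v₁ v₂ p.1 p.2) (inr b)) (inr b)),
              swapPerm_inr_v]
            congr 1
            exact Finset.prod_congr rfl fun b _ => by rw [swapPerm_inr v₁ v₂ p.1 p.2 b]
      _ = (A (inl v₁) (inr v₂)) * (A (inr v₂) (inl v₁))
          * ((∑ τ₁ : Equiv.Perm {a : V₁ // a ≠ v₁},
                ∏ a : {a : V₁ // a ≠ v₁}, A (inl ((τ₁ a : _) : V₁)) (inl a)) *
             (∑ τ₂ : Equiv.Perm {b : V₂ // b ≠ v₂},
                ∏ b : {b : V₂ // b ≠ v₂}, A (inr ((τ₂ b : _) : V₂)) (inr b))) := by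
          rw [Finset.sum_mul_sum, Fintype.sum_prod_type, Finset.mul_sum]
          refine Finset.sum_congr rfl fun τ₁ _ => ?_
          rw [Finset.mul_sum]
          refine Finset.sum_congr rfl fun τ₂ _ => by ring
      _ = _ := rfl
  calc A.permanent = ∑ σ ∈ Sb ∪ Ss, f σ :=
        (Finset.sum_subset (Finset.subset_univ _) (fun σ _ hσ => hvanish σ hσ)).symm
    _ = ∑ σ ∈ Sb, f σ + ∑ σ ∈ Ss, f σ := Finset.sum_union hdisj
    _ = _ := by rw [hb_eq, hs_eq]

end Block

section App

open Sum

variable {W : Type*} [Fintype W] [DecidableEq W]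

lemma lap_apply (G : SimpleGraph W) [DecidableRel G.Adj] (i j : W) :
    lap G i j = (if i = j then ((G.degree i : ℝ)) else 0)
      - (if G.Adj i j then (1:ℝ) else 0) := by
  by_cases hij : i = j
  · subst hij
    have : ¬ G.Adj i i := G.irrefl
    simp only [lap, SimpleGraph.lapMatrix, SimpleGraph.degMatrix, SimpleGraph.adjMatrix,
      Matrix.sub_apply, Matrix.diagonal_apply, Matrix.of_apply, if_pos rfl, this, if_false,
      if_true, sub_zero]
    congr!
  · by_cases hadj : G.Adj i j <;>
      simp [lap, SimpleGraph.lapMatrix, SimpleGraph.degMatrix, SimpleGraph.adjMatrix,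
        Matrix.diagonal_apply, hij, hadj]

lemma degree_eq_sum (G : SimpleGraph W) [DecidableRel G.Adj] (i : W) :
    ((G.degree i : ℝ)) = ∑ j, if G.Adj i j then (1:ℝ) else 0 := by
  rw [SimpleGraph.degree, show G.neighborFinset i = Finset.univ.filter (fun j => G.Adj i j) by
      ext j; simp,
    Finset.card_filter, Nat.cast_sum]
  exact Finset.sum_congr rfl fun j _ => by split_ifs <;> simp

variable {V₁ V₂ : Type*} [Fintype V₁] [DecidableEq V₁] [Fintype V₂] [DecidableEq V₂]
variable (G₁ : SimpleGraph V₁) (G₂ : SimpleGraph V₂) (v₁ : V₁) (v₂ : V₂)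

lemma edgeJoin_adj_ll (a b : V₁) :
    (edgeJoin G₁ G₂ v₁ v₂).Adj (inl a) (inl b) ↔ G₁.Adj a b := Iff.rfl

lemma edgeJoin_adj_lr (a : V₁) (b : V₂) :
    (edgeJoin G₁ G₂ v₁ v₂).Adj (inl a) (inr b) ↔ a = v₁ ∧ b = v₂ := Iff.rfl

lemma edgeJoin_adj_rl (b : V₂) (a : V₁) :
    (edgeJoin G₁ G₂ v₁ v₂).Adj (inr b) (inl a) ↔ a = v₁ ∧ b = v₂ := Iff.rfl

lemma edgeJoin_adj_rr (b c : V₂) :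
    (edgeJoin G₁ G₂ v₁ v₂).Adj (inr b) (inr c) ↔ G₂.Adj b c := Iff.rfl

lemma degree_edgeJoin_inl [DecidableRel G₁.Adj]
    [DecidableRel (edgeJoin G₁ G₂ v₁ v₂).Adj] (a : V₁) :
    (((edgeJoin G₁ G₂ v₁ v₂).degree (inl a) : ℝ))
      = (G₁.degree a : ℝ) + (if a = v₁ then (1:ℝ) else 0) := by
  rw [degree_eq_sum, degree_eq_sum]
  rw [Fintype.sum_sum_type]
  congr 1
  · exact Finset.sum_congr rfl fun b _ => by
      by_cases h : G₁.Adj a b <;> simp [edgeJoin_adj_ll G₁ G₂ v₁ v₂, h]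
  · by_cases ha : a = v₁
    · subst ha
      rw [Finset.sum_eq_single v₂]
      · simp [edgeJoin_adj_lr]
      · intro b _ hb
        simp [edgeJoin_adj_lr, hb]
      · simp
    · rw [if_neg ha]
      refine Finset.sum_eq_zero fun b _ => ?_
      simp [edgeJoin_adj_lr, ha]

lemma degree_edgeJoin_inr [DecidableRel G₂.Adj]
    [DecidableRel (edgeJoin G₁ G₂ v₁ v₂).Adj] (b : V₂) :
    (((edgeJoin G₁ G₂ v₁ v₂).degree (inr b) : ℝ))
      = (G₂.degree b : ℝ) + (if b = v₂ then (1:ℝ) else 0) := by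
  rw [degree_eq_sum, degree_eq_sum]
  rw [Fintype.sum_sum_type]
  have h1 : ∑ a : V₁, (if (edgeJoin G₁ G₂ v₁ v₂).Adj (inr b) (inl a) then (1:ℝ) else 0)
      = if b = v₂ then (1:ℝ) else 0 := by
    by_cases hb : b = v₂
    · subst hb
      rw [Finset.sum_eq_single v₁]
      · simp [edgeJoin_adj_rl]
      · intro a _ ha
        simp [edgeJoin_adj_rl, ha]
      · simp
    · rw [if_neg hb]
      refine Finset.sum_eq_zero fun a _ => ?_
      simp [edgeJoin_adj_rl, hb]
  rw [h1]
  have h2 : ∑ c : V₂, (if (edgeJoin G₁ G₂ v₁ v₂).Adj (inr b) (inr c) then (1:ℝ) else 0)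
      = ∑ c : V₂, (if G₂.Adj b c then (1:ℝ) else 0) :=
    Finset.sum_congr rfl fun c _ => by
      by_cases h : G₂.Adj b c <;> simp [edgeJoin_adj_rr G₁ G₂ v₁ v₂, h]
  rw [h2]
  ring

lemma lap_edgeJoin_ll :
    (lap (edgeJoin G₁ G₂ v₁ v₂)).submatrix inl inl
      = lap G₁ + Matrix.single v₁ v₁ (1:ℝ) := by
  classical
  ext a a'
  rw [Matrix.submatrix_apply, Matrix.add_apply, lap_apply, lap_apply]
  simp only [edgeJoin_adj_ll G₁ G₂ v₁ v₂]
  by_cases h : a = a'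
  · subst h
    rw [degree_edgeJoin_inl G₁ G₂ v₁ v₂ a]
    by_cases ha : a = v₁
    · subst ha
      simp [Matrix.single]
    · simp only [Matrix.single, Matrix.of_apply, if_pos rfl]
      rw [if_neg ha, if_neg (fun hh : v₁ = a ∧ v₁ = a => ha hh.1.symm)]
      ring
  · have h' : (inl a : V₁ ⊕ V₂) = inl a' ↔ False := by simp [h]
    simp only [if_neg h, h', if_false]
    have hstd : Matrix.single v₁ v₁ (1:ℝ) a a' = 0 := by
      simp only [Matrix.single, Matrix.of_apply, ite_eq_right_iff, and_imp]
      intro h1 h2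
      exact absurd (h1.symm.trans h2) h
    rw [hstd]
    ring

lemma lap_edgeJoin_rr :
    (lap (edgeJoin G₁ G₂ v₁ v₂)).submatrix inr inr
      = lap G₂ + Matrix.single v₂ v₂ (1:ℝ) := by
  classical
  ext b b'
  rw [Matrix.submatrix_apply, Matrix.add_apply, lap_apply, lap_apply]
  simp only [edgeJoin_adj_rr G₁ G₂ v₁ v₂]
  by_cases h : b = b'
  · subst h
    rw [degree_edgeJoin_inr G₁ G₂ v₁ v₂ b]
    by_cases hb : b = v₂
    · subst hb
      simp [Matrix.single]
    · simp only [Matrix.single, Matrix.of_apply, if_pos rfl]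
      rw [if_neg hb, if_neg (fun hh : v₂ = b ∧ v₂ = b => hb hh.1.symm)]
      ring
  · have h' : (inr b : V₁ ⊕ V₂) = inr b' ↔ False := by simp [h]
    simp only [if_neg h, h', if_false]
    have hstd : Matrix.single v₂ v₂ (1:ℝ) b b' = 0 := by
      simp only [Matrix.single, Matrix.of_apply, ite_eq_right_iff, and_imp]
      intro h1 h2
      exact absurd (h1.symm.trans h2) h
    rw [hstd]
    ring

lemma lap_edgeJoin_lr (a : V₁) (b : V₂) :
    lap (edgeJoin G₁ G₂ v₁ v₂) (inl a) (inr b)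
      = if a = v₁ ∧ b = v₂ then (-1 : ℝ) else 0 := by
  classical
  rw [lap_apply]
  simp only [edgeJoin_adj_lr G₁ G₂ v₁ v₂, reduceCtorEq, if_false]
  by_cases h : a = v₁ ∧ b = v₂ <;> simp [h]

lemma lap_edgeJoin_rl (a : V₁) (b : V₂) :
    lap (edgeJoin G₁ G₂ v₁ v₂) (inr b) (inl a)
      = if a = v₁ ∧ b = v₂ then (-1 : ℝ) else 0 := by
  classical
  rw [lap_apply]
  simp only [edgeJoin_adj_rl G₁ G₂ v₁ v₂, reduceCtorEq, if_false]
  by_cases h : a = v₁ ∧ b = v₂ <;> simp [h]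

end App

section Had

variable {α β : Type*} [Fintype β] [DecidableEq β]

lemma hadamard_submatrix (A B : Matrix β β ℝ) (f : α → β) :
    (Matrix.hadamard A B).submatrix f f
      = Matrix.hadamard (A.submatrix f f) (B.submatrix f f) := by
  ext i j
  simp [Matrix.hadamard]

lemma hadamard_del (A B : Matrix β β ℝ) (v : β) :
    del (Matrix.hadamard A B) v = Matrix.hadamard (del A v) (del B v) := by
  ext i j
  simp [Matrix.hadamard, del]

lemma del_add_std (L : Matrix β β ℝ) (v : β) (c : ℝ) :
    del (L + Matrix.single v v c) v = del L v := by
  ext i j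
  simp only [del, Matrix.submatrix_apply, Matrix.add_apply, Matrix.single,
    Matrix.of_apply, add_eq_left, ite_eq_right_iff, and_imp]
  intro h1 _
  exact absurd h1.symm i.2

lemma hadamard_add_std (L : Matrix β β ℝ) (v : β) :
    Matrix.hadamard (L + Matrix.single v v (1:ℝ))
        (L + Matrix.single v v (1:ℝ))
      = Matrix.hadamard L L + Matrix.single v v (2 * L v v + 1) := by
  ext i j
  by_cases h : v = i ∧ v = j
  · obtain ⟨h1, h2⟩ := h
    subst h1; subst h2
    simp [Matrix.hadamard, Matrix.single]
    ring
  · have hz : ∀ c : ℝ, Matrix.single v v c i j = 0 := fun c => by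
      simp only [Matrix.single, Matrix.of_apply, ite_eq_right_iff, and_imp]
      intro h1 h2
      exact absurd ⟨h1, h2⟩ h
    simp [Matrix.hadamard, hz]

end Had

end CholletAux

open CholletAux Sum in
/-- Joining two graphs by a single edge preserves Chollet's Laplacian inequality. -/
theorem edgeJoin_permanent_hadamard_le_sq {V₁ V₂ : Type*} [Fintype V₁] [DecidableEq V₁]
    [Fintype V₂] [DecidableEq V₂] (G₁ : SimpleGraph V₁) (G₂ : SimpleGraph V₂)
    (v₁ : V₁) (v₂ : V₂)
    (h1 : (Matrix.hadamard (lap G₁) (lap G₁)).permanent ≤ (lap G₁).permanent ^ 2)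
    (h2 : (Matrix.hadamard (lap G₂) (lap G₂)).permanent ≤ (lap G₂).permanent ^ 2)
    (h1v : (Matrix.hadamard (del (lap G₁) v₁) (del (lap G₁) v₁)).permanent ≤
      (del (lap G₁) v₁).permanent ^ 2)
    (h2v : (Matrix.hadamard (del (lap G₂) v₂) (del (lap G₂) v₂)).permanent ≤
      (del (lap G₂) v₂).permanent ^ 2) :
    (Matrix.hadamard (lap (edgeJoin G₁ G₂ v₁ v₂)) (lap (edgeJoin G₁ G₂ v₁ v₂))).permanent ≤
      (lap (edgeJoin G₁ G₂ v₁ v₂)).permanent ^ 2 := by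
  classical
  set L₁ := lap G₁ with hL₁def
  set L₂ := lap G₂ with hL₂def
  set A := lap (edgeJoin G₁ G₂ v₁ v₂) with hAdef
  set p₁ := L₁.permanent
  set p₂ := L₂.permanent
  set q₁ := (del L₁ v₁).permanent
  set q₂ := (del L₂ v₂).permanent
  set P₁ := (Matrix.hadamard L₁ L₁).permanent
  set P₂ := (Matrix.hadamard L₂ L₂).permanent
  set Q₁ := (Matrix.hadamard (del L₁ v₁) (del L₁ v₁)).permanent
  set Q₂ := (Matrix.hadamard (del L₂ v₂) (del L₂ v₂)).permanent
  set d₁ := L₁ v₁ v₁ with hd₁def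
  set d₂ := L₂ v₂ v₂ with hd₂def
  -- cross-entry structure of A
  have hc12 : ∀ a b, ¬(a = v₁ ∧ b = v₂) → A (inl a) (inr b) = 0 := fun a b h => by
    rw [hAdef, lap_edgeJoin_lr, if_neg h]
  have hc21 : ∀ a b, ¬(a = v₁ ∧ b = v₂) → A (inr b) (inl a) = 0 := fun a b h => by
    rw [hAdef, lap_edgeJoin_rl, if_neg h]
  have hA12 : A (inl v₁) (inr v₂) = -1 := by
    rw [hAdef, lap_edgeJoin_lr, if_pos ⟨rfl, rfl⟩]
  have hA21 : A (inr v₂) (inl v₁) = -1 := by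
    rw [hAdef, lap_edgeJoin_rl, if_pos ⟨rfl, rfl⟩]
  have hll : A.submatrix inl inl = L₁ + Matrix.single v₁ v₁ (1:ℝ) :=
    lap_edgeJoin_ll G₁ G₂ v₁ v₂
  have hrr : A.submatrix inr inr = L₂ + Matrix.single v₂ v₂ (1:ℝ) :=
    lap_edgeJoin_rr G₁ G₂ v₁ v₂
  -- permanent of A
  have hperA : A.permanent = (p₁ + q₁) * (p₂ + q₂) + q₁ * q₂ := by
    rw [permanent_block A v₁ v₂ hc12 hc21, hA12, hA21, hll, hrr,
      permanent_add_single L₁ v₁ 1, permanent_add_single L₂ v₂ 1,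
      del_add_std L₁ v₁ 1, del_add_std L₂ v₂ 1]
    ring
  -- permanent of the Hadamard square
  set H := Matrix.hadamard A A with hHdef
  have hHc12 : ∀ a b, ¬(a = v₁ ∧ b = v₂) → H (inl a) (inr b) = 0 := fun a b h => by
    rw [hHdef, Matrix.hadamard_apply, hc12 a b h, mul_zero]
  have hHc21 : ∀ a b, ¬(a = v₁ ∧ b = v₂) → H (inr b) (inl a) = 0 := fun a b h => by
    rw [hHdef, Matrix.hadamard_apply, hc21 a b h, mul_zero]
  have hH12 : H (inl v₁) (inr v₂) = 1 := by
    rw [hHdef, Matrix.hadamard_apply, hA12]; norm_num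
  have hH21 : H (inr v₂) (inl v₁) = 1 := by
    rw [hHdef, Matrix.hadamard_apply, hA21]; norm_num
  have hHll : H.submatrix inl inl
      = Matrix.hadamard L₁ L₁ + Matrix.single v₁ v₁ (2 * d₁ + 1) := by
    rw [hHdef, hadamard_submatrix A A inl, hll, hadamard_add_std]
  have hHrr : H.submatrix inr inr
      = Matrix.hadamard L₂ L₂ + Matrix.single v₂ v₂ (2 * d₂ + 1) := by
    rw [hHdef, hadamard_submatrix A A inr, hrr, hadamard_add_std]
  have hdelH1 : del (Matrix.hadamard L₁ L₁) v₁
      = Matrix.hadamard (del L₁ v₁) (del L₁ v₁) := hadamard_del L₁ L₁ v₁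
  have hdelH2 : del (Matrix.hadamard L₂ L₂) v₂
      = Matrix.hadamard (del L₂ v₂) (del L₂ v₂) := hadamard_del L₂ L₂ v₂
  have hperH : H.permanent
      = (P₁ + (2 * d₁ + 1) * Q₁) * (P₂ + (2 * d₂ + 1) * Q₂) + Q₁ * Q₂ := by
    rw [permanent_block H v₁ v₂ hHc12 hHc21, hH12, hH21, hHll, hHrr,
      permanent_add_single (Matrix.hadamard L₁ L₁) v₁ (2 * d₁ + 1),
      permanent_add_single (Matrix.hadamard L₂ L₂) v₂ (2 * d₂ + 1),
      del_add_std (Matrix.hadamard L₁ L₁) v₁ (2 * d₁ + 1),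
      del_add_std (Matrix.hadamard L₂ L₂) v₂ (2 * d₂ + 1),
      hdelH1, hdelH2]
    ring
  -- positivity facts
  have hpsd₁ : L₁.PosSemidef := lap_posSemidef G₁
  have hpsd₂ : L₂.PosSemidef := lap_posSemidef G₂
  have hd₁ : 0 ≤ d₁ := psd_diag_nonneg hpsd₁ v₁
  have hd₂ : 0 ≤ d₂ := psd_diag_nonneg hpsd₂ v₂
  have hq₁ : 0 ≤ q₁ := psd_permanent_nonneg (psd_del hpsd₁ v₁)
  have hq₂ : 0 ≤ q₂ := psd_permanent_nonneg (psd_del hpsd₂ v₂)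
  have hp₁ : d₁ * q₁ ≤ p₁ := psd_permanent_del_le hpsd₁ v₁
  have hp₂ : d₂ * q₂ ≤ p₂ := psd_permanent_del_le hpsd₂ v₂
  have hQ₁ : 0 ≤ Q₁ := permanent_nonneg fun i j => by
    rw [Matrix.hadamard_apply]; exact mul_self_nonneg _
  have hQ₂ : 0 ≤ Q₂ := permanent_nonneg fun i j => by
    rw [Matrix.hadamard_apply]; exact mul_self_nonneg _
  have hP₁ : 0 ≤ P₁ := permanent_nonneg fun i j => by
    rw [Matrix.hadamard_apply]; exact mul_self_nonneg _
  have hP₂ : 0 ≤ P₂ := permanent_nonneg fun i j => by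
    rw [Matrix.hadamard_apply]; exact mul_self_nonneg _
  have ha₁ : 0 ≤ p₁ + q₁ := by nlinarith [mul_nonneg hd₁ hq₁]
  have ha₂ : 0 ≤ p₂ + q₂ := by nlinarith [mul_nonneg hd₂ hq₂]
  -- per-graph Chollet inequality for the bordered matrices
  have hkey₁ : P₁ + (2 * d₁ + 1) * Q₁ ≤ (p₁ + q₁) ^ 2 := by
    nlinarith [h1, h1v, mul_le_mul_of_nonneg_left h1v (le_of_lt (by linarith : (0:ℝ) < 2 * d₁ + 1)),
      mul_nonneg hd₁ hQ₁, mul_le_mul_of_nonneg_right hp₁ hq₁,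
      mul_le_mul_of_nonneg_left h1v hd₁]
  have hkey₂ : P₂ + (2 * d₂ + 1) * Q₂ ≤ (p₂ + q₂) ^ 2 := by
    nlinarith [h2, h2v, mul_nonneg hd₂ hQ₂, mul_le_mul_of_nonneg_right hp₂ hq₂,
      mul_le_mul_of_nonneg_left h2v hd₂]
  have hA₁nn : 0 ≤ P₁ + (2 * d₁ + 1) * Q₁ := by nlinarith [mul_nonneg hd₁ hQ₁]
  have hA₂nn : 0 ≤ P₂ + (2 * d₂ + 1) * Q₂ := by nlinarith [mul_nonneg hd₂ hQ₂]
  -- combine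
  rw [hperH, hperA]
  have hprod1 : (P₁ + (2 * d₁ + 1) * Q₁) * (P₂ + (2 * d₂ + 1) * Q₂)
      ≤ (p₁ + q₁) ^ 2 * (p₂ + q₂) ^ 2 :=
    mul_le_mul hkey₁ hkey₂ hA₂nn (sq_nonneg _)
  have hprod2 : Q₁ * Q₂ ≤ q₁ ^ 2 * q₂ ^ 2 :=
    mul_le_mul (le_trans h1v (le_refl _)) (le_trans h2v (le_refl _)) hQ₂ (sq_nonneg _)
  have hcross : 0 ≤ ((p₁ + q₁) * (p₂ + q₂)) * (q₁ * q₂) := by positivity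
  nlinarith [hprod1, hprod2, hcross]
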